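/- Let P be an N-element poset, let x ∈ P, and let X = {y ∈ P : y <_P x}. Suppose that every element of P that is comparable with some element of X is also comparable with x. If L and L̃ are labelings of P that agree on P ∖ X, then for every integer γ ≥ 1 the labelings ∂^γ(L) and ∂^γ(L̃) also agree on P ∖ X. -/

import Mathlib

open scoped Classical

noncomputable section

abbrev Labeling (P : Type*) [Fintype P] : Type _ := P ≃ Fin (Fintype.card P)

variable {P : Type*} [Fintype P] [PartialOrder P]

def IsLinearExt (L : Labeling P) : Prop := ∀ x y : P, x ≤ y → L x ≤ L y

def lSucc (L : Labeling P) (v : P)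
    (h : (Finset.univ.filter fun y => v < y).Nonempty) : P :=
  L.symm (((Finset.univ.filter fun y => v < y).image L).min' (h.image _))

lemma lt_lSucc (L : Labeling P) (v : P)
    (h : (Finset.univ.filter fun y => v < y).Nonempty) : v < lSucc L v h := by
  have hmem := Finset.min'_mem ((Finset.univ.filter fun y => v < y).image L) (h.image _)
  obtain ⟨y, hy, hLy⟩ := Finset.mem_image.mp hmem
  have heq : lSucc L v h = y := by
    unfold lSucc
    rw [← hLy, Equiv.symm_apply_apply]
  rw [heq]
  exact (Finset.mem_filter.mp hy).2

def promChainFrom (L : Labeling P) (v : P) : List P :=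
  if h : (Finset.univ.filter fun y => v < y).Nonempty then
    v :: promChainFrom L (lSucc L v h)
  else [v]
termination_by (Finset.univ.filter fun y => v < y).card
decreasing_by
  apply Finset.card_lt_card
  refine (Finset.ssubset_iff_of_subset ?_).mpr ?_
  · intro z hz
    simp only [Finset.mem_filter, Finset.mem_univ, true_and] at *
    exact lt_trans (lt_lSucc L v h) hz
  · exact ⟨lSucc L v h, by simp [lt_lSucc L v h], by simp⟩

def promote (L : Labeling P) : Labeling P :=
  if h : Nonempty P then
    ((List.formPerm (promChainFrom L (L.symm ⟨0, @Fintype.card_pos P _ h⟩))).trans L).trans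
      (finRotate (Fintype.card P)).symm
  else L

/-- The label of `x` under `L`, as an integer in `{1, …, n}`. -/
def labelOf (L : Labeling P) (x : P) : ℕ := (L x : ℕ) + 1

/-- The largest `a ∈ {0, …, n}` such that for all `j ∈ {n−a+1, …, n}`, the set
`{x ∈ P : j ≤ L(x) ≤ n}` is an upper order ideal of `P`. -/
def frozenA (L : Labeling P) : ℕ :=
  sSup {a : ℕ | a ≤ Fintype.card P ∧
    ∀ j, Fintype.card P - a + 1 ≤ j → j ≤ Fintype.card P →
      IsUpperSet {x : P | j ≤ labelOf L x ∧ labelOf L x ≤ Fintype.card P}}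

/-- `x` is frozen with respect to `L` if `n − a + 1 ≤ L(x) ≤ n`, where `a` is as in `frozenA`. -/
def IsFrozen (L : Labeling P) (x : P) : Prop :=
  Fintype.card P - frozenA L + 1 ≤ labelOf L x

/-- A labeling of an `n`-element poset is tangled if `n ≥ 2` and `∂^{n−2}(L)` is
not a linear extension. -/
def IsTangled (L : Labeling P) : Prop :=
  2 ≤ Fintype.card P ∧ ¬ IsLinearExt (promote^[Fintype.card P - 2] L)

/-- A labeling of an `n`-element poset is `k`-untangled if `n ≥ k + 2` and
`∂^{n−k−2}(L)` is not a linear extension. -/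
def IsUntangled (k : ℕ) (L : Labeling P) : Prop :=
  k + 2 ≤ Fintype.card P ∧ ¬ IsLinearExt (promote^[Fintype.card P - k - 2] L)

/-- The comparability graph of a poset. -/
def compGraph (P : Type*) [PartialOrder P] : SimpleGraph P where
  Adj x y := x ≠ y ∧ (x ≤ y ∨ y ≤ x)
  symm := by
    constructor
    intro x y hxy
    exact ⟨hxy.1.symm, hxy.2.symm⟩
  loopless := by
    constructor
    intro x hx
    exact hx.1 rfl

/-- The standardization of an injective map from a finite type into a linear order:
the unique relabeling by `{1, …, n}` with the same relative order of values. -/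
def standardize {R β : Type*} [Fintype R] [LinearOrder β]
    (f : R → β) (hf : Function.Injective f) : R ≃ Fin (Fintype.card R) :=
  have hcard : (Finset.univ.image f).card = Fintype.card R := by
    rw [Finset.card_image_of_injective _ hf, Finset.card_univ]
  (Equiv.ofBijective (fun x => (⟨f x, by simp⟩ : ↥(Finset.univ.image f)))
    (by
      rw [Fintype.bijective_iff_injective_and_card]
      refine ⟨fun a b hab => hf (congrArg Subtype.val hab), ?_⟩
      rw [Fintype.card_coe, hcard])).trans
    ((Finset.univ.image f).orderIsoOfFin hcard).symm.toEquiv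

/-- The toggle operator `τ_{k+1}`: it swaps the labels `k+1` and `k+2` (i.e. the
`Fin`-labels `k` and `k+1`) unless `L⁻¹(k+1) <_P L⁻¹(k+2)`. -/
def toggle (L : Labeling P) (k : ℕ) : Labeling P :=
  if h : k + 1 < Fintype.card P then
    if L.symm ⟨k, Nat.lt_of_succ_lt h⟩ < L.symm ⟨k + 1, h⟩ then L
    else L.trans (Equiv.swap ⟨k, Nat.lt_of_succ_lt h⟩ ⟨k + 1, h⟩)
  else L

/-- An element `x` is `L`-golden if every element strictly above it has a larger label. -/
def IsGolden (L : Labeling P) (x : P) : Prop := ∀ y : P, x < y → L x < L y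

/-- The largest label `n` of an `n`-element poset, as an element of `Fin n`. -/
def topFin (P : Type*) [Fintype P] [Nonempty P] : Fin (Fintype.card P) :=
  ⟨Fintype.card P - 1, Nat.sub_lt Fintype.card_pos Nat.one_pos⟩

/-!
Let `X = {y | y < x}`. Its complement is an upper set and promotion chains only climb, so a chain
starting outside `X` depends only on the labels outside `X`. A chain starting in `X` climbs inside
`X` until, by the comparability hypothesis, it steps to an element above `x`; that element is the
one with the smallest label in the up-set of `x`, which again depends only on the labels outside
`X`. Hence the chains of the two labelings differ only in initial segments inside `X`, and the
cyclic shift along them sends each element outside `X` either to the same element outside `X` or,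
for the common top of the chains, to the bottom of the chain, which has label `1` in both cases.
-/

namespace List

variable {α β : Type*} [DecidableEq α]

theorem formPerm_append_cons (A C : List α) (c : α) :
    formPerm (A ++ c :: C) = formPerm (A ++ [c]) * formPerm (c :: C) := by
  induction A with
  | nil => simp
  | cons a A ih =>
    cases A with
    | nil => simp [formPerm_cons_cons]
    | cons b A =>
      simp only [cons_append] at ih ⊢
      rw [formPerm_cons_cons, ih, formPerm_cons_cons, mul_assoc]

theorem formPerm_append_singleton_apply_self (A : List α) (c : α) :
    formPerm (A ++ [c]) c ∈ (A ++ [c]).head? := by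
  cases A with
  | nil => simp
  | cons a A =>
    have h := formPerm_apply_getLast a (A ++ [c])
    rw [show (a :: (A ++ [c])).getLast (cons_ne_nil _ _) = c by simp] at h
    simp [h]

theorem apply_formPerm_append_eq {f g : α → β} {A A' C : List α} {z : α} (hC : C ≠ [])
    (hnd : (A ++ C).Nodup) (hnd' : (A' ++ C).Nodup) (hzA : z ∉ A) (hzA' : z ∉ A')
    (hhead : ∀ a ∈ (A ++ C).head?, ∀ a' ∈ (A' ++ C).head?, f a = g a')
    (hfg : ∀ y ∈ z :: C, f y = g y) :
    f (formPerm (A ++ C) z) = g (formPerm (A' ++ C) z) := by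
  obtain ⟨c, C, rfl⟩ := exists_cons_of_ne_nil hC
  have hτ : formPerm (c :: C) z ∈ z :: c :: C := by
    by_cases hz : z ∈ c :: C
    · exact mem_cons_of_mem _ (formPerm_apply_mem_of_mem hz)
    · simp [formPerm_apply_of_notMem hz]
  rw [formPerm_append_cons A, formPerm_append_cons A', Equiv.Perm.mul_apply, Equiv.Perm.mul_apply]
  by_cases hc : formPerm (c :: C) z = c
  · rw [hc]
    have hh : ∀ B : List α, formPerm (B ++ [c]) c ∈ (B ++ c :: C).head? := fun B => by
      simpa [head?_append] using formPerm_append_singleton_apply_self B c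
    exact hhead _ (hh A) _ (hh A')
  · have hfix : ∀ B : List α, (B ++ c :: C).Nodup → z ∉ B →
        formPerm (B ++ [c]) (formPerm (c :: C) z) = formPerm (c :: C) z := by
      intro B hnd hzB
      refine formPerm_apply_of_notMem ?_
      rw [mem_append, mem_singleton, not_or]
      refine ⟨fun hB => ?_, hc⟩
      rcases mem_cons.mp hτ with h | h
      · exact hzB (h ▸ hB)
      · exact disjoint_of_nodup_append hnd hB h
    rw [hfix A hnd hzA, hfix A' hnd' hzA']
    exact hfg _ hτ

end List

def minLabeled {α : Type*} [Fintype α] (L : Labeling α) (s : Finset α) (hs : s.Nonempty) : α :=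
  L.symm ((s.image L).min' (hs.image _))

section MinLabeled

variable {α : Type*} [Fintype α] (L L' : Labeling α) {s : Finset α} (hs : s.Nonempty)

theorem minLabeled_mem : minLabeled L s hs ∈ s := by
  obtain ⟨y, hy, hLy⟩ := Finset.mem_image.mp (Finset.min'_mem (s.image L) (hs.image _))
  rwa [minLabeled, ← hLy, Equiv.symm_apply_apply]

theorem label_minLabeled_le {y : α} (hy : y ∈ s) : L (minLabeled L s hs) ≤ L y := by
  rw [minLabeled, Equiv.apply_symm_apply]
  exact Finset.min'_le _ _ (Finset.mem_image_of_mem L hy)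

theorem eq_minLabeled {y : α} (hy : y ∈ s) (hmin : ∀ u ∈ s, L y ≤ L u) :
    y = minLabeled L s hs :=
  L.injective <| le_antisymm (hmin _ (minLabeled_mem L hs)) (label_minLabeled_le L hs hy)

theorem minLabeled_congr (hagree : ∀ y ∈ s, L y = L' y) :
    minLabeled L s hs = minLabeled L' s hs := by
  refine (eq_minLabeled L hs (minLabeled_mem L' hs) fun u hu => ?_).symm
  rw [hagree _ (minLabeled_mem L' hs), hagree u hu]
  exact label_minLabeled_le L' hs hu

end MinLabeled

def minLabeledAbove (L : Labeling P) (x : P) : P :=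
  minLabeled L (Finset.univ.filter fun y => x ≤ y) ⟨x, by simp⟩

theorem le_minLabeledAbove (L : Labeling P) (x : P) : x ≤ minLabeledAbove L x :=
  (Finset.mem_filter.mp (minLabeled_mem L _)).2

section PromChain

variable (L L' : Labeling P)

theorem head?_promChainFrom (v : P) : (promChainFrom L v).head? = some v := by
  rw [promChainFrom]
  split <;> rfl

theorem promChainFrom_ne_nil (v : P) : promChainFrom L v ≠ [] := by
  simpa using congrArg Option.isSome (head?_promChainFrom L v)

theorem le_of_mem_promChainFrom {v w : P} (hw : w ∈ promChainFrom L v) : v ≤ w := by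
  induction v using promChainFrom.induct L with
  | case1 v h ih =>
    rw [promChainFrom, dif_pos h, List.mem_cons] at hw
    rcases hw with rfl | hw
    · exact le_rfl
    · exact (lt_lSucc L v h).le.trans (ih hw)
  | case2 v h =>
    rw [promChainFrom, dif_neg h, List.mem_singleton] at hw
    exact hw.ge

theorem promChainFrom_nodup (v : P) : (promChainFrom L v).Nodup := by
  induction v using promChainFrom.induct L with
  | case1 v h ih =>
    rw [promChainFrom, dif_pos h, List.nodup_cons]
    exact ⟨fun hv => (lt_lSucc L v h).not_ge (le_of_mem_promChainFrom L hv), ih⟩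
  | case2 v h =>
    rw [promChainFrom, dif_neg h]
    exact List.nodup_singleton v

theorem promChainFrom_congr {U : Set P} (hU : IsUpperSet U) (hagree : ∀ z ∈ U, L z = L' z)
    {v : P} (hv : v ∈ U) : promChainFrom L v = promChainFrom L' v := by
  induction v using promChainFrom.induct L with
  | case1 v h ih =>
    have hsucc : lSucc L v h = lSucc L' v h :=
      minLabeled_congr L L' h fun y hy => hagree y (hU (Finset.mem_filter.mp hy).2.le hv)
    rw [promChainFrom, promChainFrom, dif_pos h, dif_pos h, ← hsucc,
      ih (hU (lt_lSucc L v h).le hv)]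
  | case2 v h =>
    rw [promChainFrom, promChainFrom, dif_neg h, dif_neg h]

theorem promChainFrom_eq_append_minLabeledAbove {x : P}
    (hcomp : ∀ v < x, ∀ y, v < y → y ≤ x ∨ x ≤ y) {v : P} (hv : v < x) :
    ∃ A : List P, (∀ a ∈ A, a < x) ∧
      promChainFrom L v = A ++ promChainFrom L (minLabeledAbove L x) := by
  induction v using promChainFrom.induct L with
  | case1 v h ih =>
    rw [promChainFrom, dif_pos h]
    by_cases hsX : lSucc L v h < x
    · obtain ⟨A, hA, hchain⟩ := ih hsX
      exact ⟨v :: A, by simpa [hv] using hA, by rw [hchain, List.cons_append]⟩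
    · have hxs : x ≤ lSucc L v h := by
        rcases hcomp v hv _ (lt_lSucc L v h) with hle | hge
        · exact (hle.lt_or_eq.resolve_left hsX).ge
        · exact hge
      have hexit : lSucc L v h = minLabeledAbove L x :=
        eq_minLabeled L _ (by simpa using hxs) fun u hu =>
          label_minLabeled_le L h (by simpa using hv.trans_le (Finset.mem_filter.mp hu).2)
      exact ⟨[v], by simpa using hv, by rw [hexit]; rfl⟩
  | case2 v h => exact absurd ⟨x, by simpa using hv⟩ h

end PromChain

theorem promote_apply [Nonempty P] (L : Labeling P) (z : P) :
    promote L z = (finRotate (Fintype.card P)).symm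
      (L ((promChainFrom L (L.symm ⟨0, Fintype.card_pos⟩)).formPerm z)) := by
  rw [promote, dif_pos ‹_›]
  rfl

section OffIdeal

variable {x : P} {L L' : Labeling P}

theorem label_formPerm_promChainFrom_eq (hcomp : ∀ v < x, ∀ y, v < y → y ≤ x ∨ x ≤ y)
    (hagree : ∀ z, ¬ z < x → L z = L' z) (i : Fin (Fintype.card P)) {z : P} (hz : ¬ z < x) :
    L ((promChainFrom L (L.symm i)).formPerm z) =
      L' ((promChainFrom L' (L'.symm i)).formPerm z) := by
  have hU : IsUpperSet {z : P | ¬ z < x} := fun a b hab ha hb => ha (hab.trans_lt hb)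
  obtain ⟨A, A', w, hA, hA', hw, hL, hL'⟩ : ∃ (A A' : List P) (w : P),
      (∀ a ∈ A, a < x) ∧ (∀ a ∈ A', a < x) ∧ ¬ w < x ∧
      promChainFrom L (L.symm i) = A ++ promChainFrom L w ∧
      promChainFrom L' (L'.symm i) = A' ++ promChainFrom L w := by
    by_cases hv : L.symm i < x
    · have hv' : L'.symm i < x := by
        by_contra hv'
        have h : L.symm i = L'.symm i :=
          L.symm_apply_eq.mpr (by rw [hagree _ hv', L'.apply_symm_apply])
        exact hv' (h ▸ hv)
      have hm : minLabeledAbove L' x = minLabeledAbove L x :=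
        minLabeled_congr L' L _ fun y hy => (hagree y (Finset.mem_filter.mp hy).2.not_gt).symm
      obtain ⟨A, hA, hchain⟩ := promChainFrom_eq_append_minLabeledAbove L hcomp hv
      obtain ⟨A', hA', hchain'⟩ := promChainFrom_eq_append_minLabeledAbove L' hcomp hv'
      have hmX : ¬ minLabeledAbove L x < x := (le_minLabeledAbove L x).not_gt
      refine ⟨A, A', _, hA, hA', hmX, hchain, ?_⟩
      rw [hchain', hm, promChainFrom_congr L' L hU (fun z hz => (hagree z hz).symm) hmX]
    · have hv' : L'.symm i = L.symm i :=
        L'.symm_apply_eq.mpr (by rw [← hagree _ hv, L.apply_symm_apply])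
      refine ⟨[], [], _, by simp, by simp, hv, rfl, ?_⟩
      rw [hv', List.nil_append, promChainFrom_congr L L' hU hagree hv]
  have hCX : ∀ y ∈ promChainFrom L w, ¬ y < x := fun y hy =>
    hU (le_of_mem_promChainFrom L hy) hw
  have hhead := head?_promChainFrom L (L.symm i)
  have hhead' := head?_promChainFrom L' (L'.symm i)
  have hnd := promChainFrom_nodup L (L.symm i)
  have hnd' := promChainFrom_nodup L' (L'.symm i)
  rw [hL] at hhead hnd ⊢
  rw [hL'] at hhead' hnd' ⊢
  refine List.apply_formPerm_append_eq (promChainFrom_ne_nil L w) hnd hnd'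
    (fun h => hz (hA z h)) (fun h => hz (hA' z h)) ?_ ?_
  · simp [hhead, hhead']
  · intro y hy
    rcases List.mem_cons.mp hy with rfl | hy
    exacts [hagree y hz, hagree y (hCX y hy)]

theorem promote_congr_of_not_lt (hcomp : ∀ v < x, ∀ y, v < y → y ≤ x ∨ x ≤ y)
    (hagree : ∀ z, ¬ z < x → L z = L' z) : ∀ z, ¬ z < x → promote L z = promote L' z := by
  have : Nonempty P := ⟨x⟩
  intro z hz
  rw [promote_apply, promote_apply, label_formPerm_promChainFrom_eq hcomp hagree _ hz]

end OffIdeal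

theorem promote_agree_off_ideal_general (x : P) (X : Set P) (hX : X = {y : P | y < x})
    (hcomp : ∀ z : P, (∃ w ∈ X, z ≤ w ∨ w ≤ z) → (z ≤ x ∨ x ≤ z))
    (L L' : Labeling P) (hagree : ∀ z ∉ X, L z = L' z) (γ : ℕ) :
    ∀ z ∉ X, promote^[γ] L z = promote^[γ] L' z := by
  subst hX
  have hcomp' : ∀ v < x, ∀ y, v < y → y ≤ x ∨ x ≤ y :=
    fun v hv y hvy => hcomp y ⟨v, hv, Or.inr hvy.le⟩
  induction γ with
  | zero => exact hagree
  | succ n ih =>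
    intro z hz
    rw [Function.iterate_succ_apply', Function.iterate_succ_apply']
    exact promote_congr_of_not_lt hcomp' ih z hz

/-- Let `X = {y : y <_P x}` and suppose every element comparable with
some element of `X` is comparable with `x`.  If two labelings agree on `P ∖ X`,
then so do their images under `∂^γ` for every `γ ≥ 1`. -/
theorem promote_agree_off_ideal (x : P) (X : Set P) (hX : X = {y : P | y < x})
    (hcomp : ∀ z : P, (∃ w ∈ X, z ≤ w ∨ w ≤ z) → (z ≤ x ∨ x ≤ z))
    (L L' : Labeling P) (hagree : ∀ z ∉ X, L z = L' z) (γ : ℕ) (hγ : 1 ≤ γ) :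
    ∀ z ∉ X, promote^[γ] L z = promote^[γ] L' z :=
  promote_agree_off_ideal_general x X hX hcomp L L' hagree γ

end
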